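/- Let k ≥ 1 and α ≥ 2 with k + α + 1 ≤ n, let G attain the maximum connective eccentricity index among all k-connected graphs of order n with independence number α, let A be a vertex cut of G with |A| = k, and let G_1, G_2 be the two components of G - A with |V(G_1)| ≥ |V(G_2)|. Then G_2 consists of a single vertex. -/

import Mathlib

open Finset
open scoped Classical

namespace CEI

variable {V : Type*}

/-- Degree of a vertex. -/
noncomputable def deg [Fintype V] (G : SimpleGraph V) (v : V) : ℕ :=
  (Finset.univ.filter fun u => G.Adj v u).card

/-- Eccentricity of a vertex. -/
noncomputable def ecc [Fintype V] (G : SimpleGraph V) (v : V) : ℕ :=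
  Finset.univ.sup fun u => G.dist v u

/-- Connective eccentricity index. -/
noncomputable def cei [Fintype V] (G : SimpleGraph V) : ℝ :=
  ∑ v : V, (deg G v : ℝ) / (ecc G v)

/-- Diameter. -/
noncomputable def diam [Fintype V] (G : SimpleGraph V) : ℕ :=
  Finset.univ.sup fun v => ecc G v

/-- `G` is `k`-connected: removing fewer than `k` vertices leaves a
connected graph with more than one vertex. -/
def KConnected [Fintype V] (k : ℕ) (G : SimpleGraph V) : Prop :=
  ∀ A : Finset V, A.card < k →
    (G.induce ((A : Set V)ᶜ)).Connected ∧ 1 < ((A : Set V)ᶜ).ncard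

/-- A set of pairwise non-adjacent vertices. -/
def IsIndepSet (G : SimpleGraph V) (s : Set V) : Prop :=
  s.Pairwise fun u v => ¬ G.Adj u v

/-- Independence number. -/
noncomputable def indepNum [Fintype V] (G : SimpleGraph V) : ℕ :=
  Finset.univ.sup fun s : Finset V => if IsIndepSet G ↑s then s.card else 0

/-- A vertex cut: deleting `A` disconnects `G`. -/
def IsVertexCut (G : SimpleGraph V) (A : Finset V) : Prop :=
  ¬ (G.induce ((A : Set V)ᶜ)).Preconnected

/-- Sequential join of complete graphs with part sizes `cs`. -/
def seqCompleteJoin (cs : List ℕ) : SimpleGraph ((i : Fin cs.length) × Fin (cs.get i)) where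
  Adj x y := x ≠ y ∧ (x.1.val = y.1.val ∨ x.1.val + 1 = y.1.val ∨ y.1.val + 1 = x.1.val)
  symm := ⟨fun x y ⟨h1, h2⟩ => ⟨h1.symm, by tauto⟩⟩
  loopless := ⟨fun x ⟨h, _⟩ => h rfl⟩

/-- `K_k ∨ (K_a ∪ K_b)`. -/
def KJoin2 (k a b : ℕ) : SimpleGraph (Fin (k + a + b)) where
  Adj x y := x ≠ y ∧ (x.val < k ∨ y.val < k ∨ (x.val < k + a ↔ y.val < k + a))
  symm := ⟨fun x y ⟨h1, h2⟩ => ⟨h1.symm, by tauto⟩⟩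
  loopless := ⟨fun x ⟨h, _⟩ => h rfl⟩

/-- `K_b ∨ a K_1`. -/
def splitGraph (b a : ℕ) : SimpleGraph (Fin (b + a)) where
  Adj x y := x ≠ y ∧ (x.val < b ∨ y.val < b)
  symm := ⟨fun x y ⟨h1, h2⟩ => ⟨h1.symm, by tauto⟩⟩
  loopless := ⟨fun x ⟨h, _⟩ => h rfl⟩

/-- `S_{n,α} = K_k ∨ (K_1 ∪ (K_{n-k-α} ∨ (α-1)K_1))`; vertices `0,…,k-1` form the
clique `K_k` joined to everything, vertex `k` is the isolated-ish `K_1`, vertices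
`k+1,…,n-α` form `K_{n-k-α}`, and vertices `n-α+1,…,n-1` are the `α-1` independent ones. -/
def Sgraph (n k a : ℕ) : SimpleGraph (Fin n) where
  Adj x y := x ≠ y ∧ (x.val < k ∨ y.val < k ∨
    (x.val ≠ k ∧ y.val ≠ k ∧ ¬(n + 1 - a ≤ x.val ∧ n + 1 - a ≤ y.val)))
  symm := ⟨fun x y ⟨h1, h2⟩ => ⟨h1.symm, by tauto⟩⟩
  loopless := ⟨fun x ⟨h, _⟩ => h rfl⟩

/-!
Suppose the smaller side `G₂` of the cut had at least two vertices, and fix a maximum independent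
set `I`. Vertices on either side of `A` are non-adjacent to the whole other side and have
eccentricity at least `2`, and vertices of `I` are non-adjacent to the rest of `I`; bounding
`deg / ecc` vertex by vertex bounds `ξ^ce(G)` by an explicit function of the sizes of `A`, `G₁`,
`G₂` and their intersections with `I`. Since `I` is maximum it meets `A` or both sides, and then
this bound lies strictly below `ξ^ce(S)` for the `k`-connected graph
`S = K_k ∨ (K_1 ∪ (K_{n-k-α} ∨ (α-1)K_1))` of independence number `α`, contradicting maximality.
-/

section Basic

variable [Fintype V] {G : SimpleGraph V}

lemma dist_le_ecc (G : SimpleGraph V) (v u : V) : G.dist v u ≤ ecc G v :=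
  Finset.le_sup (Finset.mem_univ u)

lemma ecc_le {v : V} {m : ℕ} (h : ∀ u, G.dist v u ≤ m) : ecc G v ≤ m :=
  Finset.sup_le fun u _ => h u

lemma one_le_ecc (hG : G.Connected) {v u : V} (hne : v ≠ u) : 1 ≤ ecc G v :=
  ((hG v u).pos_dist_of_ne hne).trans_le (dist_le_ecc G v u)

lemma two_le_ecc (hG : G.Connected) {v u : V} (hne : v ≠ u) (hadj : ¬ G.Adj v u) :
    2 ≤ ecc G v := by
  have h0 := (hG v u).pos_dist_of_ne hne
  have h1 : G.dist v u ≠ 1 := fun h => hadj (SimpleGraph.dist_eq_one_iff_adj.mp h)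
  exact le_trans (by omega) (dist_le_ecc G v u)

lemma ecc_le_one_of_forall_adj {v : V} (h : ∀ u, u ≠ v → G.Adj v u) : ecc G v ≤ 1 :=
  ecc_le fun u => by
    rcases eq_or_ne u v with rfl | hu
    · simp
    · exact (SimpleGraph.dist_eq_one_iff_adj.mpr (h u hu)).le

lemma deg_add_card_le_card {v : V} {T : Finset V} (h : ∀ u ∈ T, ¬ G.Adj v u) :
    deg G v + T.card ≤ Fintype.card V := by
  have hsub : (univ.filter fun u => G.Adj v u) ⊆ univ \ T := fun u hu => by
    simp only [mem_filter, mem_sdiff, mem_univ, true_and] at hu ⊢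
    exact fun huT => h u huT hu
  have := card_le_card hsub
  rw [card_sdiff_of_subset (subset_univ T), card_univ] at this
  have := card_le_univ T
  unfold deg
  omega

lemma card_le_deg {v : V} {T : Finset V} (h : ∀ u ∈ T, G.Adj v u) : T.card ≤ deg G v :=
  card_le_card fun u hu => mem_filter.mpr ⟨mem_univ u, h u hu⟩

lemma card_le_indepNum {I : Finset V} (hI : IsIndepSet G I) : I.card ≤ indepNum G := by
  have := Finset.le_sup (f := fun s : Finset V => if IsIndepSet G s then s.card else 0)
    (mem_univ I)
  simp only [if_pos hI] at this
  exact this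

lemma indepNum_le {m : ℕ} (h : ∀ I : Finset V, IsIndepSet G I → I.card ≤ m) :
    indepNum G ≤ m :=
  Finset.sup_le fun I _ => by
    split_ifs with hI
    exacts [h I hI, Nat.zero_le m]

lemma exists_isIndepSet_card_eq_indepNum (G : SimpleGraph V) :
    ∃ I : Finset V, IsIndepSet G I ∧ I.card = indepNum G := by
  obtain ⟨I, -, hI⟩ := Finset.exists_mem_eq_sup univ univ_nonempty
    (fun s : Finset V => if IsIndepSet G s then s.card else 0)
  by_cases hind : IsIndepSet G I
  · exact ⟨I, hind, by rw [indepNum, hI, if_pos hind]⟩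
  · refine ⟨∅, fun u hu => absurd hu (by simp), by rw [indepNum, hI, if_neg hind, card_empty]⟩

lemma mem_of_forall_not_adj {I : Finset V} (hI : IsIndepSet G I) (hcard : I.card = indepNum G)
    {w : V} (hw : ∀ v ∈ I, ¬ G.Adj w v) : w ∈ I := by
  by_contra hwI
  have hind : IsIndepSet G ↑(insert w I) := by
    intro u hu v hv huv
    simp only [coe_insert, Set.mem_insert_iff, mem_coe] at hu hv
    rcases hu with rfl | hu <;> rcases hv with rfl | hv
    exacts [absurd rfl huv, hw v hv, fun h => hw u hu h.symm, hI hu hv huv]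
  have := card_le_indepNum hind
  rw [card_insert_of_notMem hwI] at this
  omega

lemma KConnected.connected {k : ℕ} (hG : KConnected k G) (hk : 1 ≤ k) : G.Connected := by
  have h := (hG ∅ (by rw [card_empty]; omega)).1
  rw [coe_empty, Set.compl_empty] at h
  exact (SimpleGraph.induceUnivIso G).connected_iff.mp h

end Basic

lemma connected_of_forall_adj {W : Type*} {H : SimpleGraph W} (w : W)
    (h : ∀ v, v ≠ w → H.Adj v w) : H.Connected := by
  have hreach : ∀ v, H.Reachable v w := fun v => by
    rcases eq_or_ne v w with rfl | hv
    exacts [SimpleGraph.Reachable.refl _, (h v hv).reachable]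
  exact (SimpleGraph.connected_iff _).mpr
    ⟨fun u v => (hreach u).trans (hreach v).symm, ⟨w⟩⟩

lemma ecc_le_two_of_forall_adj [Fintype V] {G : SimpleGraph V} (w : V)
    (h : ∀ v, v ≠ w → G.Adj v w) (v : V) : ecc G v ≤ 2 := by
  have hw : ∀ u, G.dist u w ≤ 1 := fun u => by
    rcases eq_or_ne u w with rfl | hu
    · simp
    · exact (SimpleGraph.dist_eq_one_iff_adj.mpr (h u hu)).le
  refine ecc_le fun u => ?_
  calc G.dist v u ≤ G.dist v w + G.dist w u := (connected_of_forall_adj w h).dist_triangle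
    _ ≤ 1 + 1 := add_le_add (hw v) (SimpleGraph.dist_comm.trans_le (hw u))

lemma sum_le_card_inter_mul_add_card_sdiff_mul {ι : Type*} [DecidableEq ι] (S I : Finset ι)
    (f : ι → ℝ) {x y : ℝ} (hx : ∀ v ∈ S, v ∈ I → f v ≤ x) (hy : ∀ v ∈ S, v ∉ I → f v ≤ y) :
    ∑ v ∈ S, f v ≤ (S ∩ I).card * x + (S \ I).card * y := by
  rw [← sum_filter_add_sum_filter_not S (· ∈ I), filter_mem_eq_inter, filter_notMem_eq_sdiff]
  gcongr
  · simpa using sum_le_card_nsmul (S ∩ I) f x fun v hv =>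
      hx v (mem_inter.mp hv).1 (mem_inter.mp hv).2
  · simpa using sum_le_card_nsmul (S \ I) f y fun v hv =>
      hy v (mem_sdiff.mp hv).1 (mem_sdiff.mp hv).2

/-- The bound on `cei G` for a separation `(A, F₁, F₂)` of `G` and an independent set `I`:
`s, t` count the vertices of `A` in and outside `I`, and `aᵢ, bᵢ` those of `Fᵢ`. -/
noncomputable def separationBound (n s t a₁ b₁ a₂ b₂ : ℝ) : ℝ :=
  s * (n - (s + a₁ + a₂)) + t * (n - 1)
    + a₁ * ((n - (a₂ + b₂) - s - a₁) / 2) + b₁ * ((n - (a₂ + b₂) - 1) / 2)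
    + a₂ * ((n - (a₁ + b₁) - s - a₂) / 2) + b₂ * ((n - (a₁ + b₁) - 1) / 2)

/-- The connective eccentricity index of `Sgraph n k a`. -/
noncomputable def sgraphBound (n k a : ℝ) : ℝ :=
  k * (n - 1) + k / 2 + (n - k - a) * (n - 2) / 2 + (a - 1) * (n - a) / 2

lemma separationBound_lt_sgraphBound {s t a₁ b₁ a₂ b₂ : ℕ} (hb₁ : 1 ≤ b₁) (hb₂ : 1 ≤ b₂)
    (hn₁ : 2 ≤ a₁ + b₁) (hn₂ : 2 ≤ a₂ + b₂) (h₁ : 1 ≤ s ∨ 1 ≤ a₁) (h₂ : 1 ≤ s ∨ 1 ≤ a₂) :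
    separationBound (s + t + a₁ + b₁ + a₂ + b₂) s t a₁ b₁ a₂ b₂
      < sgraphBound (s + t + a₁ + b₁ + a₂ + b₂) (s + t) (s + a₁ + a₂) := by
  have key : 2 * (sgraphBound (s + t + a₁ + b₁ + a₂ + b₂) (s + t) (s + a₁ + a₂)
      - separationBound (s + t + a₁ + b₁ + a₂ + b₂) s t a₁ b₁ a₂ b₂)
      = 2 * (((a₁ : ℝ) + b₁ - 1) * ((a₂ : ℝ) + b₂ - 1) - ((a₁ : ℝ) - 1) * ((a₂ : ℝ) - 1))
        + s * (1 + s + a₁ + a₂) := by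
    simp only [sgraphBound, separationBound]
    ring
  rw [← sub_pos, ← mul_pos_iff_of_pos_left (two_pos : (0 : ℝ) < 2), key]
  have hb₁' : (1 : ℝ) ≤ b₁ := by exact_mod_cast hb₁
  have hb₂' : (1 : ℝ) ≤ b₂ := by exact_mod_cast hb₂
  have hn₁' : (2 : ℝ) ≤ a₁ + b₁ := by exact_mod_cast hn₁
  have hn₂' : (2 : ℝ) ≤ a₂ + b₂ := by exact_mod_cast hn₂
  have hs : (0 : ℝ) ≤ s := Nat.cast_nonneg s
  have ha₁ : (0 : ℝ) ≤ a₁ := Nat.cast_nonneg a₁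
  have ha₂ : (0 : ℝ) ≤ a₂ := Nat.cast_nonneg a₂
  rcases Nat.eq_zero_or_pos s with hs0 | hs0
  · have h₁ : (1 : ℝ) ≤ a₁ := by exact_mod_cast h₁.resolve_left (by omega)
    have h₂ : (1 : ℝ) ≤ a₂ := by exact_mod_cast h₂.resolve_left (by omega)
    nlinarith [mul_le_mul_of_nonneg_right (by linarith : (a₁ : ℝ) - 1 ≤ a₁ + b₁ - 1)
      (by linarith : (0 : ℝ) ≤ a₂ - 1)]
  · have hs1 : (1 : ℝ) ≤ s := by exact_mod_cast hs0
    nlinarith [mul_nonneg (by linarith : (0 : ℝ) ≤ a₁ + b₁ - 2)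
      (by linarith : (0 : ℝ) ≤ a₂ + b₂ - 2)]

lemma sum_div_ecc_le [Fintype V] [Nontrivial V] {G : SimpleGraph V} (hG : G.Connected)
    (S : Finset V) {I : Finset V} (hI : IsIndepSet G I) :
    ∑ v ∈ S, (deg G v : ℝ) / ecc G v ≤
      (S ∩ I).card * (Fintype.card V - I.card : ℝ) + (S \ I).card * (Fintype.card V - 1 : ℝ) := by
  have hdiv : ∀ v, (deg G v : ℝ) / ecc G v ≤ deg G v := fun v => by
    obtain ⟨u, hu⟩ := exists_ne v
    exact div_le_self (Nat.cast_nonneg _) (by exact_mod_cast one_le_ecc hG hu.symm)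
  apply sum_le_card_inter_mul_add_card_sdiff_mul
  · intro v _ hvI
    have hdeg := deg_add_card_le_card (G := G) (T := I) fun u hu hadj => hI hvI hu hadj.ne hadj
    have hdeg' : (deg G v : ℝ) + I.card ≤ Fintype.card V := by exact_mod_cast hdeg
    linarith [hdiv v]
  · intro v _ _
    have hdeg := deg_add_card_le_card (G := G) (T := {v}) fun u hu hadj =>
      hadj.ne (mem_singleton.mp hu).symm
    have hdeg' : (deg G v : ℝ) + 1 ≤ Fintype.card V := by exact_mod_cast hdeg
    linarith [hdiv v]

structure IsSeparation [Fintype V] (G : SimpleGraph V) (A F₁ F₂ : Finset V) : Prop where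
  disjoint_cut_left : Disjoint A F₁
  disjoint_cut_right : Disjoint A F₂
  disjoint_sides : Disjoint F₁ F₂
  union_eq_univ : A ∪ F₁ ∪ F₂ = univ
  not_adj : ∀ v ∈ F₁, ∀ w ∈ F₂, ¬ G.Adj v w

namespace IsSeparation

variable [Fintype V] {G : SimpleGraph V} {A F₁ F₂ : Finset V}

lemma symm (h : IsSeparation G A F₁ F₂) : IsSeparation G A F₂ F₁ where
  disjoint_cut_left := h.disjoint_cut_right
  disjoint_cut_right := h.disjoint_cut_left
  disjoint_sides := h.disjoint_sides.symm
  union_eq_univ := by rw [union_right_comm, h.union_eq_univ]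
  not_adj v hv w hw hadj := h.not_adj w hw v hv hadj.symm

lemma card_eq (h : IsSeparation G A F₁ F₂) (X : Finset V) :
    X.card = (A ∩ X).card + (F₁ ∩ X).card + (F₂ ∩ X).card := by
  conv_lhs => rw [← univ_inter X, ← h.union_eq_univ, union_inter_distrib_right,
    union_inter_distrib_right]
  rw [card_union_of_disjoint, card_union_of_disjoint]
  · exact h.disjoint_cut_left.mono inter_subset_left inter_subset_left
  · rw [← union_inter_distrib_right]
    exact (disjoint_union_left.mpr ⟨h.disjoint_cut_right, h.disjoint_sides⟩).mono
      inter_subset_left inter_subset_left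

lemma sum_eq (h : IsSeparation G A F₁ F₂) (f : V → ℝ) :
    ∑ v, f v = ∑ v ∈ A, f v + ∑ v ∈ F₁, f v + ∑ v ∈ F₂, f v := by
  rw [← h.union_eq_univ, sum_union (disjoint_union_left.mpr
    ⟨h.disjoint_cut_right, h.disjoint_sides⟩), sum_union h.disjoint_cut_left]

lemma two_le_ecc (h : IsSeparation G A F₁ F₂) (hG : G.Connected) (hF₂ : F₂.Nonempty)
    {v : V} (hv : v ∈ F₁) : 2 ≤ ecc G v := by
  obtain ⟨w, hw⟩ := hF₂
  exact CEI.two_le_ecc hG (fun hvw => disjoint_left.mp h.disjoint_sides (hvw ▸ hv) hw)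
    (h.not_adj v hv w hw)

lemma sum_side_le (h : IsSeparation G A F₁ F₂) (hG : G.Connected) (hF₂ : F₂.Nonempty)
    {I : Finset V} (hI : IsIndepSet G I) :
    ∑ v ∈ F₁, (deg G v : ℝ) / ecc G v ≤
      (F₁ ∩ I).card * ((Fintype.card V - F₂.card - (A ∩ I).card - (F₁ ∩ I).card : ℝ) / 2)
        + (F₁ \ I).card * ((Fintype.card V - F₂.card - 1 : ℝ) / 2) := by
  have hdiv : ∀ v ∈ F₁, (deg G v : ℝ) / ecc G v ≤ deg G v / 2 := fun v hv =>
    div_le_div_of_nonneg_left (Nat.cast_nonneg _) two_pos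
      (by exact_mod_cast h.two_le_ecc hG hF₂ hv)
  apply sum_le_card_inter_mul_add_card_sdiff_mul
  · intro v hv hvI
    have hdeg := deg_add_card_le_card (T := F₂ ∪ I) fun u hu hadj => (mem_union.mp hu).elim
      (fun hu => h.not_adj v hv u hu hadj) (fun hu => hI hvI hu hadj.ne hadj)
    have hunion := card_union_add_card_inter F₂ I
    have hI' := h.card_eq I
    have hdeg' : (deg G v : ℝ) + F₂.card + (A ∩ I).card + (F₁ ∩ I).card ≤ Fintype.card V := by
      exact_mod_cast (by omega : deg G v + F₂.card + (A ∩ I).card + (F₁ ∩ I).card ≤ _)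
    linarith [hdiv v hv]
  · intro v hv _
    have hdeg := deg_add_card_le_card (T := insert v F₂) fun u hu hadj =>
      (mem_insert.mp hu).elim (fun hu => hadj.ne hu.symm)
        (fun hu => h.not_adj v hv u hu hadj)
    rw [card_insert_of_notMem (disjoint_left.mp h.disjoint_sides hv)] at hdeg
    have hdeg' : (deg G v : ℝ) + F₂.card + 1 ≤ Fintype.card V := by exact_mod_cast hdeg
    linarith [hdiv v hv]

lemma cei_le (h : IsSeparation G A F₁ F₂) (hG : G.Connected) (hF₁ : F₁.Nonempty)
    (hF₂ : F₂.Nonempty) {I : Finset V} (hI : IsIndepSet G I) :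
    cei G ≤ separationBound (Fintype.card V) (A ∩ I).card (A \ I).card
      (F₁ ∩ I).card (F₁ \ I).card (F₂ ∩ I).card (F₂ \ I).card := by
  obtain ⟨w₁, hw₁⟩ := hF₁
  obtain ⟨w₂, hw₂⟩ := hF₂
  have : Nontrivial V := ⟨w₁, w₂, fun h' => disjoint_left.mp h.disjoint_sides (h' ▸ hw₁) hw₂⟩
  have hcut := sum_div_ecc_le hG A hI
  have hside₁ := h.sum_side_le hG ⟨w₂, hw₂⟩ hI
  have hside₂ := h.symm.sum_side_le hG ⟨w₁, hw₁⟩ hI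
  have hIcard : (I.card : ℝ) = (A ∩ I).card + (F₁ ∩ I).card + (F₂ ∩ I).card := by
    exact_mod_cast h.card_eq I
  have hF₁card : (F₁.card : ℝ) = (F₁ ∩ I).card + (F₁ \ I).card := by
    exact_mod_cast (card_inter_add_card_sdiff F₁ I).symm
  have hF₂card : (F₂.card : ℝ) = (F₂ ∩ I).card + (F₂ \ I).card := by
    exact_mod_cast (card_inter_add_card_sdiff F₂ I).symm
  rw [hIcard] at hcut
  rw [hF₂card] at hside₁
  rw [hF₁card] at hside₂
  rw [cei, h.sum_eq, separationBound]
  linarith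

lemma inter_nonempty (h : IsSeparation G A F₁ F₂) {I : Finset V} (hI : IsIndepSet G I)
    (hImax : I.card = indepNum G) (hF₁ : F₁.Nonempty) :
    (A ∩ I).Nonempty ∨ (F₁ ∩ I).Nonempty := by
  by_contra hcon
  simp only [not_or, not_nonempty_iff_eq_empty, ← disjoint_iff_inter_eq_empty] at hcon
  have hIF₂ : I ⊆ F₂ := fun v hv => by
    have hv' : v ∈ A ∪ F₁ ∪ F₂ := h.union_eq_univ ▸ mem_univ v
    simp only [mem_union] at hv'
    rcases hv' with (hvA | hvF₁) | hvF₂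
    exacts [absurd hv (disjoint_left.mp hcon.1 hvA), absurd hv (disjoint_left.mp hcon.2 hvF₁), hvF₂]
  obtain ⟨w, hw⟩ := hF₁
  exact disjoint_left.mp hcon.2 hw
    (mem_of_forall_not_adj hI hImax fun v hv => h.not_adj w hw v (hIF₂ hv))

lemma cei_lt_sgraphBound (h : IsSeparation G A F₁ F₂) (hG : G.Connected) {I : Finset V}
    (hI : IsIndepSet G I) (hImax : I.card = indepNum G) (hF₁ : 2 ≤ F₁.card) (hF₂ : 2 ≤ F₂.card)
    (hF₁I : (F₁ \ I).Nonempty) (hF₂I : (F₂ \ I).Nonempty) :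
    cei G < sgraphBound (Fintype.card V) A.card I.card := by
  have hF₁' : F₁.Nonempty := card_pos.mp (by omega)
  have hF₂' : F₂.Nonempty := card_pos.mp (by omega)
  have hV : (Fintype.card V : ℝ) = (A ∩ I).card + (A \ I).card + (F₁ ∩ I).card + (F₁ \ I).card
      + (F₂ ∩ I).card + (F₂ \ I).card := by
    have := h.card_eq univ
    simp only [inter_univ, card_univ] at this
    rw [← card_inter_add_card_sdiff A I, ← card_inter_add_card_sdiff F₁ I,
      ← card_inter_add_card_sdiff F₂ I] at this
    exact_mod_cast this.trans (by ring)
  have hA : (A.card : ℝ) = (A ∩ I).card + (A \ I).card := by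
    exact_mod_cast (card_inter_add_card_sdiff A I).symm
  have hIcard : (I.card : ℝ) = (A ∩ I).card + (F₁ ∩ I).card + (F₂ ∩ I).card := by
    exact_mod_cast h.card_eq I
  have hlt := separationBound_lt_sgraphBound (t := (A \ I).card) (card_pos.mpr hF₁I)
    (card_pos.mpr hF₂I) ((card_inter_add_card_sdiff F₁ I).symm ▸ hF₁)
    ((card_inter_add_card_sdiff F₂ I).symm ▸ hF₂)
    ((h.inter_nonempty hI hImax hF₁').imp card_pos.mpr card_pos.mpr)
    ((h.symm.inter_nonempty hI hImax hF₂').imp card_pos.mpr card_pos.mpr)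
  calc cei G ≤ _ := h.cei_le hG hF₁' hF₂' hI
    _ < _ := by rwa [hV]
    _ = _ := by rw [hV, hA, hIcard]

end IsSeparation

section Components

variable [Fintype V] {G : SimpleGraph V} {S : Set V}

noncomputable def componentFinset (c : (G.induce S).ConnectedComponent) : Finset V :=
  univ.filter fun v => ∃ hv : v ∈ S, (G.induce S).connectedComponentMk ⟨v, hv⟩ = c

lemma mem_componentFinset {c : (G.induce S).ConnectedComponent} {v : V} :
    v ∈ componentFinset c ↔ ∃ hv : v ∈ S, (G.induce S).connectedComponentMk ⟨v, hv⟩ = c := by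
  simp [componentFinset]

lemma coe_componentFinset (c : (G.induce S).ConnectedComponent) :
    (componentFinset c : Set V) = Subtype.val '' c.supp := by
  ext v
  simp [mem_componentFinset]

lemma card_componentFinset (c : (G.induce S).ConnectedComponent) :
    (componentFinset c).card = c.supp.ncard := by
  rw [← Set.ncard_coe_finset, coe_componentFinset,
    Set.ncard_image_of_injective _ Subtype.val_injective]

lemma not_adj_of_mem_componentFinset {c c' : (G.induce S).ConnectedComponent} (hne : c ≠ c')
    {v w : V} (hv : v ∈ componentFinset c) (hw : w ∈ componentFinset c') : ¬ G.Adj v w := by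
  obtain ⟨hvS, rfl⟩ := mem_componentFinset.mp hv
  obtain ⟨hwS, rfl⟩ := mem_componentFinset.mp hw
  exact fun hadj => hne (SimpleGraph.ConnectedComponent.connectedComponentMk_eq_of_adj
    (G := G.induce S) (v := ⟨v, hvS⟩) (w := ⟨w, hwS⟩) hadj)

lemma exists_adj_of_two_le_card_componentFinset {c : (G.induce S).ConnectedComponent}
    (hc : 2 ≤ (componentFinset c).card) :
    ∃ u ∈ componentFinset c, ∃ w ∈ componentFinset c, G.Adj u w := by
  obtain ⟨x, hx, y, hy, hxy⟩ := one_lt_card.mp hc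
  obtain ⟨hxS, rfl⟩ := mem_componentFinset.mp hx
  obtain ⟨hyS, hc⟩ := mem_componentFinset.mp hy
  obtain ⟨p⟩ := SimpleGraph.ConnectedComponent.exact hc.symm
  have hadj := p.adj_snd (p.not_nil_of_ne fun h => hxy (congrArg Subtype.val h))
  refine ⟨x, hx, p.getVert 1, mem_componentFinset.mpr ⟨(p.getVert 1).2, ?_⟩, hadj⟩
  exact (SimpleGraph.ConnectedComponent.connectedComponentMk_eq_of_adj hadj).symm

lemma isSeparation_componentFinset (A : Finset V)
    {c₁ c₂ : (G.induce (A : Set V)ᶜ).ConnectedComponent} (hne : c₁ ≠ c₂)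
    (hall : ∀ c, c = c₁ ∨ c = c₂) :
    IsSeparation G A (componentFinset c₁) (componentFinset c₂) := by
  have hA : ∀ c : (G.induce (A : Set V)ᶜ).ConnectedComponent, Disjoint A (componentFinset c) :=
    fun c => disjoint_right.mpr fun v hv => by simpa using (mem_componentFinset.mp hv).1
  refine ⟨hA c₁, hA c₂, disjoint_left.mpr fun v hv₁ hv₂ => ?_, ?_,
    fun v hv w hw => not_adj_of_mem_componentFinset hne hv hw⟩
  · obtain ⟨_, h₁⟩ := mem_componentFinset.mp hv₁
    obtain ⟨_, h₂⟩ := mem_componentFinset.mp hv₂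
    exact hne (h₁.symm.trans h₂)
  · refine eq_univ_iff_forall.mpr fun v => ?_
    by_cases hvA : v ∈ A
    · simp [hvA]
    · have hvS : v ∈ (A : Set V)ᶜ := by simpa using hvA
      rcases hall ((G.induce (A : Set V)ᶜ).connectedComponentMk ⟨v, hvS⟩) with h | h
      · exact mem_union_left _ (mem_union_right _ (mem_componentFinset.mpr ⟨hvS, h⟩))
      · exact mem_union_right _ (mem_componentFinset.mpr ⟨hvS, h⟩)

lemma sdiff_componentFinset_nonempty {c : (G.induce S).ConnectedComponent}
    (hc : 2 ≤ (componentFinset c).card) {I : Finset V} (hI : IsIndepSet G I) :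
    (componentFinset c \ I).Nonempty := by
  obtain ⟨u, hu, w, hw, hadj⟩ := exists_adj_of_two_le_card_componentFinset hc
  exact sdiff_nonempty.mpr fun hsub => hI (hsub hu) (hsub hw) hadj.ne hadj

end Components

section Sgraph

variable {n k a : ℕ}

lemma sgraph_adj_of_lt {i j : Fin n} (hi : i.val < k) (hij : i ≠ j) : (Sgraph n k a).Adj i j :=
  ⟨hij, Or.inl hi⟩

lemma sgraph_connected (hk : 0 < k) (hkn : k < n) : (Sgraph n k a).Connected :=
  connected_of_forall_adj ⟨0, by omega⟩ fun _ hv => (sgraph_adj_of_lt hk hv.symm).symm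

lemma one_le_ecc_sgraph (hk : 0 < k) (hkn : k < n) (i : Fin n) : 1 ≤ ecc (Sgraph n k a) i := by
  have : Nontrivial (Fin n) := Fin.nontrivial_iff_two_le.mpr (by omega)
  obtain ⟨j, hj⟩ := exists_ne i
  exact one_le_ecc (sgraph_connected hk hkn) hj.symm

lemma ecc_sgraph_le_two (hk : 0 < k) (hkn : k < n) (i : Fin n) : ecc (Sgraph n k a) i ≤ 2 :=
  ecc_le_two_of_forall_adj ⟨0, by omega⟩ (fun _ hv => (sgraph_adj_of_lt hk hv.symm).symm) i

lemma ecc_sgraph_le_one {i : Fin n} (hi : i.val < k) : ecc (Sgraph n k a) i ≤ 1 :=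
  ecc_le_one_of_forall_adj fun _ hu => sgraph_adj_of_lt hi hu.symm

lemma le_deg_sgraph_of_lt {i : Fin n} (hi : i.val < k) : n ≤ deg (Sgraph n k a) i + 1 := by
  have h := card_le_deg (G := Sgraph n k a) (T := univ.erase i) fun u hu =>
    sgraph_adj_of_lt hi (ne_of_mem_erase hu).symm
  rw [card_erase_of_mem (mem_univ i), card_univ, Fintype.card_fin] at h
  omega

lemma le_deg_sgraph_of_eq {i : Fin n} (hi : i.val = k) : k ≤ deg (Sgraph n k a) i := by
  have h := card_le_deg (G := Sgraph n k a) (T := Iio ⟨k, hi ▸ i.2⟩) fun u hu => by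
    have hu : u.val < k := by simpa [Fin.lt_def] using hu
    exact (sgraph_adj_of_lt (j := i) hu fun h => by rw [h] at hu; omega).symm
  rwa [Fin.card_Iio] at h

lemma le_deg_sgraph_of_mid {i : Fin n} (hki : k < i.val) (hi : i.val < n + 1 - a) :
    n ≤ deg (Sgraph n k a) i + 2 := by
  have hkmem : (⟨k, by omega⟩ : Fin n) ∈ univ.erase i :=
    mem_erase.mpr ⟨Fin.ne_of_val_ne (by simp; omega), mem_univ _⟩
  have h := card_le_deg (G := Sgraph n k a) (T := (univ.erase i).erase ⟨k, by omega⟩)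
    fun u hu => by
      have hui := ne_of_mem_erase (mem_of_mem_erase hu)
      have huk : u.val ≠ k := fun h => ne_of_mem_erase hu (Fin.ext h)
      exact ⟨hui.symm, Or.inr (Or.inr ⟨by omega, huk, by omega⟩)⟩
  rw [card_erase_of_mem hkmem, card_erase_of_mem (mem_univ i), card_univ, Fintype.card_fin] at h
  omega

lemma le_deg_sgraph_of_top (ha : 1 ≤ a) (hkn : k + a ≤ n) {i : Fin n} (hi : n + 1 - a ≤ i.val) :
    n ≤ deg (Sgraph n k a) i + a := by
  have hkmem : (⟨k, by omega⟩ : Fin n) ∈ Iio (⟨n + 1 - a, by omega⟩ : Fin n) := by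
    simp only [mem_Iio, Fin.mk_lt_mk]; omega
  have h := card_le_deg (G := Sgraph n k a) (T := (Iio ⟨n + 1 - a, by omega⟩).erase ⟨k, by omega⟩)
    fun u hu => by
      have hu' : u.val < n + 1 - a := by simpa [Fin.lt_def] using mem_of_mem_erase hu
      have huk : u.val ≠ k := fun h => ne_of_mem_erase hu (Fin.ext h)
      exact ⟨Fin.ne_of_val_ne (by omega : i.val ≠ u.val), Or.inr (Or.inr ⟨by omega, huk, by omega⟩)⟩
  rw [card_erase_of_mem hkmem, Fin.card_Iio] at h
  simp only at h
  omega

noncomputable def sgraphVertexBound (n k a j : ℕ) : ℝ :=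
  if j < k then n - 1 else if j = k then k / 2 else if j < n + 1 - a then (n - 2) / 2
  else (n - a) / 2

lemma sgraphVertexBound_le (hk : 0 < k) (ha : 0 < a) (hn : k + a ≤ n) (i : Fin n) :
    sgraphVertexBound n k a i ≤ (deg (Sgraph n k a) i : ℝ) / ecc (Sgraph n k a) i := by
  have hecc₁ : (1 : ℝ) ≤ ecc (Sgraph n k a) i := by exact_mod_cast one_le_ecc_sgraph hk (by omega) i
  have hecc₂ : (ecc (Sgraph n k a) i : ℝ) ≤ 2 := by exact_mod_cast ecc_sgraph_le_two hk (by omega) i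
  unfold sgraphVertexBound
  split_ifs with hik hik' hmid
  · have hecc : ecc (Sgraph n k a) i = 1 :=
      le_antisymm (ecc_sgraph_le_one hik) (by exact_mod_cast hecc₁)
    have hdeg : (n : ℝ) ≤ deg (Sgraph n k a) i + 1 := by exact_mod_cast le_deg_sgraph_of_lt hik
    rw [hecc, Nat.cast_one, div_one]
    linarith
  all_goals
    refine le_trans ?_ (div_le_div_of_nonneg_left (Nat.cast_nonneg _) (by linarith) hecc₂)
    gcongr
  · exact_mod_cast le_deg_sgraph_of_eq hik'
  · have hdeg : (n : ℝ) ≤ deg (Sgraph n k a) i + 2 := by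
      exact_mod_cast le_deg_sgraph_of_mid (by omega) hmid
    linarith
  · have hdeg : (n : ℝ) ≤ deg (Sgraph n k a) i + a := by
      exact_mod_cast le_deg_sgraph_of_top ha hn (by omega)
    linarith

lemma sum_range_sgraphVertexBound (ha : 0 < a) (hn : k + a ≤ n) :
    ∑ j ∈ range n, sgraphVertexBound n k a j = sgraphBound n k a := by
  have hsum : ∀ {p q : ℕ} {x : ℝ}, p ≤ q → (∀ j, p ≤ j → j < q → sgraphVertexBound n k a j = x) →
      ∑ j ∈ Ico p q, sgraphVertexBound n k a j = ((q : ℝ) - p) * x := fun hpq h => by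
    rw [sum_congr rfl fun j hj => h j (mem_Ico.mp hj).1 (mem_Ico.mp hj).2, sum_const,
      Nat.card_Ico, nsmul_eq_mul, Nat.cast_sub hpq]
  rw [range_eq_Ico, ← sum_Ico_consecutive _ (Nat.zero_le k) (by omega : k ≤ n),
    ← sum_Ico_consecutive _ (Nat.le_succ k) (by omega : k + 1 ≤ n),
    ← sum_Ico_consecutive _ (by omega : k + 1 ≤ n + 1 - a) (by omega : n + 1 - a ≤ n),
    hsum (Nat.zero_le k) fun j _ hj => if_pos hj,
    hsum (Nat.le_succ k) fun j hj hj' => by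
      rw [sgraphVertexBound, if_neg (by omega), if_pos (by omega)],
    hsum (by omega : k + 1 ≤ n + 1 - a) fun j hj hj' => by
      rw [sgraphVertexBound, if_neg (by omega), if_neg (by omega), if_pos hj'],
    hsum (by omega : n + 1 - a ≤ n) fun j hj hj' => by
      rw [sgraphVertexBound, if_neg (by omega), if_neg (by omega), if_neg (by omega)],
    Nat.cast_sub (by omega : a ≤ n + 1), sgraphBound]
  push_cast
  ring

lemma sgraphBound_le_cei (hk : 0 < k) (ha : 0 < a) (hn : k + a ≤ n) :
    sgraphBound n k a ≤ cei (Sgraph n k a) := by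
  rw [← sum_range_sgraphVertexBound ha hn, ← Fin.sum_univ_eq_sum_range]
  exact sum_le_sum fun i _ => sgraphVertexBound_le hk ha hn i

lemma sgraph_kConnected (hkn : k < n) : KConnected k (Sgraph n k a) := by
  intro B hB
  obtain ⟨i, hik, hiB⟩ := not_subset.mp fun h : Iio (⟨k, hkn⟩ : Fin n) ⊆ B => by
    have := card_le_card h
    rw [Fin.card_Iio] at this
    simp only at this
    omega
  have hik : i.val < k := by simpa [Fin.lt_def] using hik
  refine ⟨connected_of_forall_adj ⟨i, by simpa using hiB⟩ fun v hv =>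
    (sgraph_adj_of_lt hik fun h => hv (Subtype.ext h.symm)).symm, ?_⟩
  have := Set.ncard_add_ncard_compl (B : Set (Fin n))
  rw [Set.ncard_coe_finset, Nat.card_eq_fintype_card, Fintype.card_fin] at this
  omega

lemma sgraph_adj_of_ne_of_lt {x y : Fin n} (hxk : x.val ≠ k) (hx : x.val < n + 1 - a)
    (hyk : y.val ≠ k) (hxy : x ≠ y) : (Sgraph n k a).Adj x y :=
  ⟨hxy, Or.inr (Or.inr ⟨hxk, hyk, by omega⟩)⟩

lemma sgraph_indepNum (ha : 2 ≤ a) (hn : k + a ≤ n) : indepNum (Sgraph n k a) = a := by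
  set z : Fin n := ⟨k, by omega⟩
  set top : Finset (Fin n) := Ici ⟨n + 1 - a, by omega⟩
  have hztop : z ∉ top := by simp [top, z, Fin.le_def]; omega
  have hcard : (insert z top).card = a := by
    rw [card_insert_of_notMem hztop, Fin.card_Ici]
    simp only
    omega
  have hmem_top {y : Fin n} : y ∈ top ↔ n + 1 - a ≤ y.val := by simp [top, Fin.le_def]
  have hval_z {y : Fin n} : y = z ↔ y.val = k := Fin.ext_iff
  refine le_antisymm (indepNum_le fun J hJ => ?_) (hcard.ge.trans (card_le_indepNum ?_))
  · by_cases hQ : ∃ x ∈ J, x.val ≠ k ∧ x.val < n + 1 - a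
    · obtain ⟨x, hxJ, hxk, hx⟩ := hQ
      have hsub : J ⊆ {x, z} := fun y hyJ => by
        by_contra hy
        simp only [mem_insert, mem_singleton, hval_z, not_or] at hy
        exact hJ hxJ hyJ (Ne.symm hy.1) (sgraph_adj_of_ne_of_lt hxk hx hy.2 (Ne.symm hy.1))
      exact (card_le_card hsub).trans ((card_le_two).trans ha)
    · push Not at hQ
      refine (card_le_card fun y hyJ => ?_).trans hcard.le
      rw [mem_insert, hmem_top, hval_z]
      by_cases hyk : y.val = k
      exacts [Or.inl hyk, Or.inr (hQ y hyJ hyk)]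
  · intro x hx y hy hxy hadj
    simp only [coe_insert, Set.mem_insert_iff, mem_coe, hmem_top, hval_z] at hx hy
    obtain ⟨-, hlt | hlt | ⟨hxk, hyk, hboth⟩⟩ := hadj
    · omega
    · omega
    · exact hboth ⟨hx.resolve_left hxk, hy.resolve_left hyk⟩

end Sgraph

theorem smaller_component_trivial_general {V : Type} [Fintype V] (G : SimpleGraph V) (n k a : ℕ)
    (hk : 1 ≤ k) (ha : 2 ≤ a) (hn : k + a + 1 ≤ n)
    (hcard : Fintype.card V = n) (hconn : KConnected k G) (hindep : indepNum G = a)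
    (hmax : ∀ (W : Type) [Fintype W] (H : SimpleGraph W),
      Fintype.card W = n → KConnected k H → indepNum H = a → cei H ≤ cei G)
    (A : Finset V) (hAcard : A.card = k)
    (c₁ c₂ : (G.induce ((A : Set V)ᶜ)).ConnectedComponent) (hne : c₁ ≠ c₂)
    (hall : ∀ c, c = c₁ ∨ c = c₂) (hle : c₂.supp.ncard ≤ c₁.supp.ncard) :
    c₂.supp.ncard = 1 := by
  by_contra hc₂_ne
  have hc₂ : 2 ≤ (componentFinset c₂).card := by
    have := (Set.ncard_pos (Set.toFinite _)).mpr c₂.nonempty_supp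
    rw [card_componentFinset]
    omega
  have hc₁ : 2 ≤ (componentFinset c₁).card := by
    rw [card_componentFinset] at hc₂ ⊢
    omega
  obtain ⟨I, hI, hImax⟩ := exists_isIndepSet_card_eq_indepNum G
  have hlt := (isSeparation_componentFinset A hne hall).cei_lt_sgraphBound (hconn.connected hk)
    hI hImax hc₁ hc₂ (sdiff_componentFinset_nonempty hc₁ hI) (sdiff_componentFinset_nonempty hc₂ hI)
  rw [hcard, hAcard, hImax, hindep] at hlt
  have hSgraph := hmax (Fin n) (Sgraph n k a) (Fintype.card_fin n) (sgraph_kConnected (by omega))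
    (sgraph_indepNum ha (by omega))
  exact (sgraphBound_le_cei (by omega) (by omega) (by omega)).trans hSgraph |>.not_gt hlt

/-- with `G` as in Statement 10 and `G₁, G₂` the two components of
`G - A` with `|V(G₁)| ≥ |V(G₂)|`, the component `G₂` is a single vertex. -/
theorem smaller_component_trivial {V : Type} [Fintype V] (G : SimpleGraph V) (n k a : ℕ)
    (hk : 1 ≤ k) (ha : 2 ≤ a) (hn : k + a + 1 ≤ n)
    (hcard : Fintype.card V = n) (hconn : KConnected k G) (hindep : indepNum G = a)
    (hmax : ∀ (W : Type) [Fintype W] (H : SimpleGraph W),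
      Fintype.card W = n → KConnected k H → indepNum H = a → cei H ≤ cei G)
    (A : Finset V) (hA : IsVertexCut G A) (hAcard : A.card = k)
    (c₁ c₂ : (G.induce ((A : Set V)ᶜ)).ConnectedComponent) (hne : c₁ ≠ c₂)
    (hall : ∀ c, c = c₁ ∨ c = c₂) (hle : c₂.supp.ncard ≤ c₁.supp.ncard) :
    c₂.supp.ncard = 1 :=
  smaller_component_trivial_general G n k a hk ha hn hcard hconn hindep hmax A hAcard c₁ c₂ hne hall
    hle

end CEI
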